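/- arXiv:2205.02685 — 3 statements merged into one kernel-verified Lean document; each statement's English description precedes it below -/
import Mathlib

section
/- Every locally almost square Banach space has the slice diameter 2 property: every slice of the unit ball has diameter 2. -/
/-! If `f x > 1 - ε` for a unit vector `x`, and `y` is a unit vector with `‖x ± y‖ ≤ 1 + ε`
(local almost squareness), then `u = (x + y) / (1 + ε)` and `v = (x - y) / (1 + ε)` lie in the
unit ball with `f u + f v = 2 f x / (1 + ε)` close to `2`; as `f ≤ 1` on the ball, both lie in
the slice, and `‖u - v‖ = 2 / (1 + ε)` tends to `2` as `ε → 0`. -/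

open Filter Topology

/-- A real Banach space `X` is locally almost square (LASQ): for every `ε > 0` and every
unit vector `x` there is a unit vector `y` with `‖x ± y‖ ≤ 1 + ε`. -/
def IsLASQ (X : Type*) [NormedAddCommGroup X] [NormedSpace ℝ X] : Prop :=
  ∀ ε : ℝ, 0 < ε → ∀ x : X, ‖x‖ = 1 →
    ∃ y : X, ‖y‖ = 1 ∧ ‖x + y‖ ≤ 1 + ε ∧ ‖x - y‖ ≤ 1 + ε

section

variable {X : Type*} [NormedAddCommGroup X] [NormedSpace ℝ X]

def unitBallSlice (f : X →L[ℝ] ℝ) (δ : ℝ) : Set X := {z : X | ‖z‖ ≤ 1 ∧ 1 - δ < f z}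

theorem unitBallSlice_subset_closedBall (f : X →L[ℝ] ℝ) (δ : ℝ) :
    unitBallSlice f δ ⊆ Metric.closedBall 0 1 :=
  fun _ hz => mem_closedBall_zero_iff.2 hz.1

theorem diam_unitBallSlice_le_two (f : X →L[ℝ] ℝ) (δ : ℝ) :
    Metric.diam (unitBallSlice f δ) ≤ 2 :=
  calc Metric.diam (unitBallSlice f δ) ≤ Metric.diam (Metric.closedBall (0 : X) 1) :=
        Metric.diam_mono (unitBallSlice_subset_closedBall f δ) Metric.isBounded_closedBall
    _ ≤ 2 * 1 := Metric.diam_closedBall zero_le_one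
    _ = 2 := mul_one 2

theorem ContinuousLinearMap.apply_le_one_of_opNorm_le_one {f : X →L[ℝ] ℝ} (hf : ‖f‖ ≤ 1)
    {z : X} (hz : ‖z‖ ≤ 1) : f z ≤ 1 :=
  (le_abs_self _).trans ((f.unit_le_opNorm z hz).trans hf)

theorem mem_unitBallSlice_of_two_sub_lt_apply_add {f : X →L[ℝ] ℝ} (hf : ‖f‖ ≤ 1) {δ : ℝ}
    {u v : X} (hu : ‖u‖ ≤ 1) (hv : ‖v‖ ≤ 1) (huv : 2 - δ < f (u + v)) :
    u ∈ unitBallSlice f δ := by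
  refine ⟨hu, ?_⟩
  have := f.apply_le_one_of_opNorm_le_one hf hv
  rw [map_add] at huv
  linarith

theorem ContinuousLinearMap.exists_norm_eq_one_lt_apply {f : X →L[ℝ] ℝ} {r : ℝ} (hr₀ : 0 ≤ r)
    (hr : r < ‖f‖) : ∃ x : X, ‖x‖ = 1 ∧ r < f x := by
  lift r to NNReal using hr₀
  obtain ⟨x, hx, hrx⟩ := f.exists_nnnorm_eq_one_lt_apply_of_lt_opNNNorm (𝕜 := ℝ) hr
  have hx : ‖x‖ = 1 := congrArg NNReal.toReal hx
  have hrx : (r : ℝ) < |f x| := hrx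
  rcases lt_abs.1 hrx with hpos | hneg
  · exact ⟨x, hx, hpos⟩
  · exact ⟨-x, by rwa [norm_neg], by rwa [map_neg]⟩

theorem IsLASQ.exists_mem_unitBallSlice_dist_eq (hX : IsLASQ X) {f : X →L[ℝ] ℝ} (hf : ‖f‖ = 1)
    {δ ε : ℝ} (hε : 0 < ε) (hε₁ : ε ≤ 1) (hεδ : 4 * ε ≤ δ) :
    ∃ u ∈ unitBallSlice f δ, ∃ v ∈ unitBallSlice f δ, dist u v = 2 / (1 + ε) := by
  obtain ⟨x, hx, hfx⟩ := f.exists_norm_eq_one_lt_apply (r := 1 - ε) (by linarith) (by linarith)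
  obtain ⟨y, hy, hxy_add, hxy_sub⟩ := hX ε hε x hx
  have hc : 0 < (1 + ε)⁻¹ := by positivity
  have hnorm : ∀ w : X, ‖w‖ ≤ 1 + ε → ‖(1 + ε)⁻¹ • w‖ ≤ 1 := fun w hw => by
    rw [norm_smul_of_nonneg hc.le, inv_mul_le_iff₀ (by linarith)]
    linarith
  set u := (1 + ε)⁻¹ • (x + y)
  set v := (1 + ε)⁻¹ • (x - y)
  have hu := hnorm _ hxy_add
  have hv := hnorm _ hxy_sub
  -- `2 (1 - ε) / (1 + ε) > 2 - δ` as soon as `4 ε ≤ δ`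
  have hsum : 2 - δ < f (u + v) := by
    have : f (u + v) = 2 * f x / (1 + ε) := by
      simp only [u, v, map_add, map_smul, map_sub, smul_eq_mul]
      ring
    rw [this, lt_div_iff₀ (by linarith)]
    nlinarith
  refine ⟨u, mem_unitBallSlice_of_two_sub_lt_apply_add hf.le hu hv hsum,
    v, mem_unitBallSlice_of_two_sub_lt_apply_add hf.le hv hu (add_comm u v ▸ hsum), ?_⟩
  have : u - v = (2 / (1 + ε)) • y := by
    simp only [u, v, ← smul_sub]
    module
  rw [dist_eq_norm, this, norm_smul_of_nonneg (by positivity), hy, mul_one]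

theorem IsLASQ.two_div_one_add_le_diam_unitBallSlice (hX : IsLASQ X) {f : X →L[ℝ] ℝ}
    (hf : ‖f‖ = 1) {δ ε : ℝ} (hε : 0 < ε) (hε₁ : ε ≤ 1) (hεδ : 4 * ε ≤ δ) :
    2 / (1 + ε) ≤ Metric.diam (unitBallSlice f δ) := by
  obtain ⟨u, hu, v, hv, huv⟩ := hX.exists_mem_unitBallSlice_dist_eq hf hε hε₁ hεδ
  exact huv ▸ Metric.dist_le_diam_of_mem
    (Metric.isBounded_closedBall.subset (unitBallSlice_subset_closedBall f δ)) hu hv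

end

theorem isLASQ_slice_diam_two_general {X : Type*} [NormedAddCommGroup X] [NormedSpace ℝ X]
    (h : IsLASQ X)
    (f : X →L[ℝ] ℝ) (hf : ‖f‖ = 1) (δ : ℝ) (hδ : 0 < δ) :
    Metric.diam {z : X | ‖z‖ ≤ 1 ∧ 1 - δ < f z} = 2 := by
  change Metric.diam (unitBallSlice f δ) = 2
  have hlim : Tendsto (fun ε : ℝ => 2 / (1 + ε)) (𝓝[>] 0) (𝓝 2) := by
    have : ContinuousAt (fun ε : ℝ => 2 / (1 + ε)) 0 :=
      continuousAt_const.div (continuousAt_const.add continuousAt_id) (by norm_num)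
    simpa using this.tendsto.mono_left nhdsWithin_le_nhds
  have hsmall : ∀ᶠ ε in 𝓝[>] (0 : ℝ), 2 / (1 + ε) ≤ Metric.diam (unitBallSlice f δ) := by
    filter_upwards [Ioo_mem_nhdsGT (lt_min (by positivity : 0 < δ / 4) one_pos)]
      with ε ⟨hε, hεmin⟩
    obtain ⟨hεδ, hε₁⟩ := lt_min_iff.1 hεmin
    exact h.two_div_one_add_le_diam_unitBallSlice hf hε hε₁.le (by linarith)
  exact (diam_unitBallSlice_le_two f δ).antisymm (le_of_tendsto hlim hsmall)

/-- Every locally almost square Banach space has the slice diameter 2 property: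
every slice `{z ∈ B_X : f z > 1 - δ}` of the unit ball has diameter 2. -/
theorem isLASQ_slice_diam_two {X : Type*} [NormedAddCommGroup X] [NormedSpace ℝ X]
    [CompleteSpace X] (h : IsLASQ X)
    (f : X →L[ℝ] ℝ) (hf : ‖f‖ = 1) (δ : ℝ) (hδ : 0 < δ) :
    Metric.diam {z : X | ‖z‖ ≤ 1 ∧ 1 - δ < f z} = 2 :=
  isLASQ_slice_diam_two_general h f hf δ hδ
end

section
/- (McShane-type extension bound used in the paper) Let M be a metric space, B an open ball B(p, r) in M, f: M → ℝ a 1-Lipschitz function, and q ∈ B with q ≠ p and d(p,q) ≤ θr for some θ > 0. Define g on (M \ B) ∪ {p, q} by g = f on M \ B, g(q) = f(q), and g(p) = f(q) + d(p,q). Then g is Lipschitz on its domain with Lipschitz constant at most 1 + 2θ. -/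
/-!
Away from `p` the modified function agrees with `f` (also at `q`), so it is `f` updated at the
single point `p`, and only the pairs `(p, x)` need an estimate. For `x = q` the jump is exactly
`d(p,q)`. For `x` outside the ball, `d(p,q) ≤ θ r ≤ θ d(p,x)`, and the triangle inequality gives
`|f q + d(p,q) - f x| ≤ d(q,x) + d(p,q) ≤ d(p,x) + 2 d(p,q) ≤ (1 + 2θ) d(p,x)`.
-/

section

open Function

variable {M : Type*} [MetricSpace M]

theorem abs_update_sub_update_le [DecidableEq M] {f : M → ℝ} {s : Set M} {p : M} {v K : ℝ}
    (hf : ∀ x ∈ s, ∀ y ∈ s, |f x - f y| ≤ K * dist x y)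
    (hv : ∀ x ∈ s, |v - f x| ≤ K * dist p x) :
    ∀ x ∈ insert p s, ∀ y ∈ insert p s,
      |update f p v x - update f p v y| ≤ K * dist x y := by
  intro x hx y hy
  have mem_of_ne {z : M} (hz : z ∈ insert p s) (hzp : z ≠ p) : z ∈ s :=
    (Set.mem_insert_iff.mp hz).resolve_left hzp
  by_cases hxp : x = p <;> by_cases hyp : y = p
  · simp [hxp, hyp]
  · subst hxp
    simpa [update_of_ne hyp] using hv y (mem_of_ne hy hyp)
  · subst hyp
    simpa [update_of_ne hxp, abs_sub_comm, dist_comm] using hv x (mem_of_ne hx hxp)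
  · simpa [update_of_ne hxp, update_of_ne hyp] using hf x (mem_of_ne hx hxp) y (mem_of_ne hy hyp)

theorem LipschitzWith.abs_add_dist_sub_le {f : M → ℝ} (hf : LipschitzWith 1 f) (p q x : M) :
    |f q + dist p q - f x| ≤ dist p x + 2 * dist p q := by
  have hfqx : |f q - f x| ≤ dist q x := by
    simpa [Real.dist_eq] using hf.dist_le_mul q x
  calc |f q + dist p q - f x| ≤ |f q - f x| + dist p q := by
        simpa [add_sub_right_comm] using abs_add_le (f q - f x) (dist p q)
    _ ≤ dist q x + dist p q := by gcongr
    _ ≤ dist p x + 2 * dist p q := by linarith [dist_triangle_left q x p]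

end

open Classical in
theorem mcshane_modification_lipschitz_general {M : Type*} [MetricSpace M]
    (p q : M) (r θ : ℝ) (hθ : 0 < θ)
    (f : M → ℝ) (hf : LipschitzWith 1 f)
    (hd : dist p q ≤ θ * r) :
    ∀ a ∈ (Metric.ball p r)ᶜ ∪ {p, q}, ∀ b ∈ (Metric.ball p r)ᶜ ∪ {p, q},
      |(if a = p then f q + dist p q else if a = q then f q else f a) -
        (if b = p then f q + dist p q else if b = q then f q else f b)| ≤
        (1 + 2 * θ) * dist a b := by
  have hg : ∀ x, (if x = p then f q + dist p q else if x = q then f q else f x) =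
      Function.update f p (f q + dist p q) x := by
    intro x
    by_cases hxp : x = p <;> by_cases hxq : x = q <;> simp_all
  have hdom : (Metric.ball p r)ᶜ ∪ {p, q} = insert p ((Metric.ball p r)ᶜ ∪ {q}) := by
    ext; simp only [Set.mem_union, Set.mem_insert_iff, Set.mem_singleton_iff]; tauto
  have hlip : ∀ x ∈ (Metric.ball p r)ᶜ ∪ {q}, ∀ y ∈ (Metric.ball p r)ᶜ ∪ {q},
      |f x - f y| ≤ (1 + 2 * θ) * dist x y := fun x _ y _ => by
    have := hf.dist_le_mul x y
    simp only [Real.dist_eq, NNReal.coe_one, one_mul] at this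
    nlinarith [dist_nonneg (x := x) (y := y)]
  have hjump : ∀ x ∈ (Metric.ball p r)ᶜ ∪ {q},
      |f q + dist p q - f x| ≤ (1 + 2 * θ) * dist p x := by
    rintro x (hx | rfl)
    · have hrx : r ≤ dist p x := by simpa [dist_comm] using hx
      have : dist p q ≤ θ * dist p x := hd.trans (by gcongr)
      linarith [hf.abs_add_dist_sub_le p q x]
    · simp only [add_sub_cancel_left, abs_dist]
      nlinarith [dist_nonneg (x := p) (y := x)]
  intro a ha b hb
  rw [hg, hg]
  rw [hdom] at ha hb
  exact abs_update_sub_update_le hlip hjump a ha b hb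

open Classical in
/-- McShane-type extension bound: modifying a 1-Lipschitz function `f` inside the open
ball `B(p,r)` by setting `g p = f q + d(p,q)` and `g q = f q` (where `d(p,q) ≤ θ r`)
yields a function that is `(1 + 2θ)`-Lipschitz on `(M \ B(p,r)) ∪ {p, q}`. -/
theorem mcshane_modification_lipschitz {M : Type*} [MetricSpace M]
    (p q : M) (r θ : ℝ) (hr : 0 < r) (hθ : 0 < θ)
    (f : M → ℝ) (hf : LipschitzWith 1 f)
    (hq : q ∈ Metric.ball p r) (hqp : q ≠ p) (hd : dist p q ≤ θ * r) :
    ∀ a ∈ (Metric.ball p r)ᶜ ∪ {p, q}, ∀ b ∈ (Metric.ball p r)ᶜ ∪ {p, q},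
      |(if a = p then f q + dist p q else if a = q then f q else f a) -
        (if b = p then f q + dist p q else if b = q then f q else f b)| ≤
        (1 + 2 * θ) * dist a b :=
  mcshane_modification_lipschitz_general p q r θ hθ f hf hd
end

section
/- Let X be a Banach space, x ∈ S_X, ε > 0, and suppose y ∈ X and elements z_j ∈ X, α_j > 0 (j = 1,…,m) satisfy: ‖x − Σ α_j z_j‖ < ε/5, Σ α_j < 1 + ε/5, ‖z_j ± y_j‖ ≤ 1 + ε/(5 m α_j) for all j where y = Σ α_j y_j, and there is g ∈ X* with ‖g‖ ≤ 1 and g(y_j) = 1 for all j. Then ‖y‖ > 1 − ε/5, ‖y‖ < 1 + 2ε/5, and ‖x ± y/‖y‖‖ ≤ 1 + ε. -/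
/-!
The functional `g` gives the lower bound: `g y = ∑ α j`, and `∑ α j > 1 - ε/5` because
`∑ α j • z j` is a combination of unit vectors within `ε/5` of the unit vector `x`.
Each `‖z j ± y j‖ ≤ 1 + ε/(5 m α j)` (and hence `‖y j‖`) costs at most `ε/(5m)` after weighting
by `α j`, so summing gives `‖y‖` and `‖∑ α j • (z j ± y j)‖` at most `∑ α j + ε/5 < 1 + 2ε/5`;
thus `‖x ± y‖ < 1 + 3ε/5`. Normalising `y` moves it by `|1 - ‖y‖| < 2ε/5`.
-/

section

variable {E : Type*} [SeminormedAddCommGroup E] [NormedSpace ℝ E]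

theorem norm_le_of_norm_add_le_of_norm_sub_le {u v : E} {r : ℝ}
    (hadd : ‖u + v‖ ≤ r) (hsub : ‖u - v‖ ≤ r) : ‖v‖ ≤ r := by
  have h := norm_sub_le (u + v) (u - v)
  rw [show (u + v) - (u - v) = (2 : ℝ) • v by module, norm_smul, Real.norm_ofNat] at h
  linarith

theorem norm_inv_norm_smul_sub_le (y : E) : ‖‖y‖⁻¹ • y - y‖ ≤ |1 - ‖y‖| := by
  rcases eq_or_ne ‖y‖ 0 with hy | hy
  · simp [hy]
  · refine le_of_eq ?_
    calc ‖‖y‖⁻¹ • y - y‖ = |‖y‖⁻¹ - 1| * ‖y‖ := by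
          rw [← Real.norm_eq_abs, ← norm_smul, sub_smul, one_smul]
      _ = |1 - ‖y‖| := by
        rw [← abs_norm y, ← abs_mul, abs_norm, sub_mul, inv_mul_cancel₀ hy, one_mul]

theorem norm_add_inv_norm_smul_le (x y : E) : ‖x + ‖y‖⁻¹ • y‖ ≤ ‖x + y‖ + |1 - ‖y‖| := by
  simpa using (norm_add_le (x + y) (‖y‖⁻¹ • y - y)).trans
    (by gcongr; exact norm_inv_norm_smul_sub_le y)

theorem norm_sub_inv_norm_smul_le (x y : E) : ‖x - ‖y‖⁻¹ • y‖ ≤ ‖x - y‖ + |1 - ‖y‖| := by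
  simpa using (norm_sub_le (x - y) (‖y‖⁻¹ • y - y)).trans
    (by gcongr; exact norm_inv_norm_smul_sub_le y)

theorem norm_sum_smul_le_sum_add {ι : Type*} [Fintype ι] {α : ι → ℝ} (hα : ∀ j, 0 < α j)
    {w : ι → E} {δ : ℝ} (hδ : 0 ≤ δ) (hw : ∀ j, ‖w j‖ ≤ 1 + δ / (Fintype.card ι * α j)) :
    ‖∑ j, α j • w j‖ ≤ ∑ j, α j + δ := by
  set n : ℝ := (Fintype.card ι : ℝ)
  calc ‖∑ j, α j • w j‖ ≤ ∑ j, ‖α j • w j‖ := norm_sum_le _ _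
    _ ≤ ∑ j, (α j + δ / n) := Finset.sum_le_sum fun j _ => by
        rw [norm_smul, Real.norm_of_nonneg (hα j).le]
        calc α j * ‖w j‖ ≤ α j * (1 + δ / (n * α j)) := by gcongr; exacts [(hα j).le, hw j]
          _ = α j + δ / n := by field_simp [(hα j).ne']
    _ = ∑ j, α j + n * (δ / n) := by
        rw [Finset.sum_add_distrib, Finset.sum_const, Finset.card_univ, nsmul_eq_mul]
    _ ≤ ∑ j, α j + δ := by
        rcases eq_or_ne n 0 with hn | hn
        · simpa [hn] using hδ
        · rw [mul_div_cancel₀ δ hn]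

end

/-- Abstract reduction step for LASQ of `F(M)`: if `x` is a unit vector approximated by a
convex-type combination `∑ α j • z j` of unit vectors, and for each `j` there is `y j`
with `‖z j ± y j‖ ≤ 1 + ε/(5 m α j)`, and a norm-one functional `g` with `g (y j) = 1`,
then `y = ∑ α j • y j` satisfies `1 - ε/5 < ‖y‖ < 1 + 2ε/5` and `‖x ± y/‖y‖‖ ≤ 1 + ε`. -/
theorem lasq_reduction_step {X : Type*} [NormedAddCommGroup X] [NormedSpace ℝ X]
    (x : X) (hx : ‖x‖ = 1) (ε : ℝ) (hε : 0 < ε) (m : ℕ)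
    (α : Fin m → ℝ) (hα : ∀ j, 0 < α j)
    (z yv : Fin m → X) (hz : ∀ j, ‖z j‖ = 1)
    (y : X) (hy : y = ∑ j, α j • yv j)
    (h1 : ‖x - ∑ j, α j • z j‖ < ε / 5)
    (h2 : ∑ j, α j < 1 + ε / 5)
    (h3 : ∀ j, ‖z j + yv j‖ ≤ 1 + ε / (5 * m * α j) ∧
      ‖z j - yv j‖ ≤ 1 + ε / (5 * m * α j))
    (g : X →L[ℝ] ℝ) (hg : ‖g‖ ≤ 1) (hgy : ∀ j, g (yv j) = 1) :
    1 - ε / 5 < ‖y‖ ∧ ‖y‖ < 1 + 2 * ε / 5 ∧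
      ‖x + ‖y‖⁻¹ • y‖ ≤ 1 + ε ∧ ‖x - ‖y‖⁻¹ • y‖ ≤ 1 + ε := by
  set S := ∑ j, α j
  have hweighted : ∀ w : Fin m → X, (∀ j, ‖w j‖ ≤ 1 + ε / (5 * m * α j)) →
      ‖∑ j, α j • w j‖ ≤ S + ε / 5 := fun w hw =>
    norm_sum_smul_le_sum_add hα (by positivity) fun j => by
      simpa [div_div, mul_assoc] using hw j
  have hz_sum : ‖∑ j, α j • z j‖ ≤ S := by
    simpa using norm_sum_smul_le_sum_add hα le_rfl (w := z) (by simp [hz])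
  have hS_gt : 1 - ε / 5 < S := by
    linarith [norm_sub_norm_le x (∑ j, α j • z j)]
  have hS_le : S ≤ ‖y‖ := calc
    S = g y := by simp [S, hy, map_sum, hgy]
    _ ≤ ‖y‖ := by simpa using (le_abs_self _).trans (g.le_of_opNorm_le hg y)
  have hy_le : ‖y‖ ≤ S + ε / 5 := hy ▸ hweighted yv fun j =>
    norm_le_of_norm_add_le_of_norm_sub_le (h3 j).1 (h3 j).2
  have hadd : ‖x + y‖ < 1 + 3 * ε / 5 := calc
    ‖x + y‖ ≤ ‖x - ∑ j, α j • z j‖ + ‖∑ j, α j • (z j + yv j)‖ := by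
      simpa [hy, smul_add, Finset.sum_add_distrib] using
        norm_sub_le_norm_sub_add_norm_sub x (∑ j, α j • z j) (-y)
    _ < 1 + 3 * ε / 5 := by linarith [hweighted _ fun j => (h3 j).1]
  have hsub : ‖x - y‖ < 1 + 3 * ε / 5 := calc
    ‖x - y‖ ≤ ‖x - ∑ j, α j • z j‖ + ‖∑ j, α j • (z j - yv j)‖ := by
      simpa [hy, smul_sub, Finset.sum_sub_distrib] using
        norm_sub_le_norm_sub_add_norm_sub x (∑ j, α j • z j) y
    _ < 1 + 3 * ε / 5 := by linarith [hweighted _ fun j => (h3 j).2]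
  have hnormalize : |1 - ‖y‖| < 2 * ε / 5 := abs_lt.mpr ⟨by linarith, by linarith⟩
  exact ⟨by linarith, by linarith, by linarith [norm_add_inv_norm_smul_le x y],
    by linarith [norm_sub_inv_norm_smul_le x y]⟩
end
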